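/- Let U be the unimodular matrix with rows (-1,0,1,0,-2), (0,-1,0,0,-2), (0,1,0,1,2), (0,0,0,-1,-1), (1,0,0,0,2), let S be the submonoid of Z^5 generated by h1,...,h9, and let S_A be the submonoid generated by H = {h1, h3-h2, h9-h2, h3-h4, h9-h4, h3-h5, h7-h5, h3-h6, h7-h6}. Then U maps S bijectively onto S_A; in particular S and S_A are isomorphic as monoids. -/

import Mathlib

open Matrix BigOperators

/-- The nine lattice vectors h1,...,h9 in ℤ^5 (indexed 0,...,8). -/
def hv : Fin 9 → Fin 5 → ℤ :=
  ![![1,0,0,0,0], ![0,1,0,0,0], ![0,0,1,0,0], ![0,0,0,1,0], ![0,0,0,0,1],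
    ![2,2,-1,1,-2], ![1,2,-1,1,-1], ![1,2,0,0,-1], ![1,1,0,1,-1]]

/-- Coordinatewise cast of an integer vector to a real vector. -/
def toR (u : Fin 5 → ℤ) : Fin 5 → ℝ := fun i => (u i : ℝ)

/-- The cone of nonnegative real combinations of a finite family of vectors in ℝ^5. -/
def coneOf {k : ℕ} (v : Fin k → Fin 5 → ℝ) : Set (Fin 5 → ℝ) :=
  {x | ∃ c : Fin k → ℝ, (∀ i, 0 ≤ c i) ∧ x = ∑ i, c i • v i}

/-- The cone ω generated by h1,...,h8 in ℝ^5. -/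
def ω : Set (Fin 5 → ℝ) := coneOf (fun i : Fin 8 => toR (hv i.castSucc))

/-- The matrix U. -/
def U : Matrix (Fin 5) (Fin 5) ℤ :=
  !![-1,0,1,0,-2; 0,-1,0,0,-2; 0,1,0,1,2; 0,0,0,-1,-1; 1,0,0,0,2]

/-- The submonoid S of ℤ^5 generated by h1,...,h9. -/
def S : AddSubmonoid (Fin 5 → ℤ) := AddSubmonoid.closure (Set.range hv)

/-- The submonoid S_A of ℤ^5 generated by H. -/
def SA : AddSubmonoid (Fin 5 → ℤ) :=
  AddSubmonoid.closure
    {hv 0, hv 2 - hv 1, hv 8 - hv 1, hv 2 - hv 3, hv 8 - hv 3,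
     hv 2 - hv 4, hv 6 - hv 4, hv 2 - hv 5, hv 6 - hv 5}

/-!
An injective additive map sends the monoid generated by a set bijectively onto the monoid
generated by the image of that set. `U` is unimodular, hence injective on `ℤ^5`, and it permutes
the generators: it sends `h1, …, h9` to the nine elements of `H`.
-/

namespace AddSubmonoid

variable {M N : Type*} [AddZeroClass M] [AddZeroClass N]

theorem bijOn_closure_image {f : M →+ N} (hf : Function.Injective f) (s : Set M) :
    Set.BijOn f (closure s) (closure (f '' s)) := by
  rw [← AddMonoidHom.map_mclosure, coe_map]
  exact hf.injOn.bijOn_image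

noncomputable def equivClosureImage {f : M →+ N} (hf : Function.Injective f) (s : Set M) :
    closure s ≃+ closure (f '' s) :=
  (equivMapOfInjective _ f hf).trans (AddEquiv.addSubmonoidCongr (AddMonoidHom.map_mclosure f s))

end AddSubmonoid

def Uinv : Matrix (Fin 5) (Fin 5) ℤ :=
  !![0,2,2,2,1; 0,1,2,2,0; 1,0,0,0,1; 0,1,1,0,0; 0,-1,-1,-1,0]

lemma Uinv_mul_U : Uinv * U = 1 := by decide

lemma mulVec_U_injective : Function.Injective U.mulVec := by
  refine Function.LeftInverse.injective (g := Uinv.mulVec) fun v => ?_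
  rw [mulVec_mulVec, Uinv_mul_U, one_mulVec]

lemma mulVec_U_comp_hv : U.mulVec ∘ hv = ![hv 6 - hv 5, hv 2 - hv 1, hv 0, hv 2 - hv 3,
    hv 2 - hv 5, hv 6 - hv 4, hv 2 - hv 4, hv 8 - hv 1, hv 8 - hv 3] := by
  decide

lemma image_mulVec_U_range_hv : U.mulVec '' Set.range hv =
    {hv 0, hv 2 - hv 1, hv 8 - hv 1, hv 2 - hv 3, hv 8 - hv 3,
     hv 2 - hv 4, hv 6 - hv 4, hv 2 - hv 5, hv 6 - hv 5} := by
  rw [← Set.range_comp, mulVec_U_comp_hv]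
  ext x
  simp only [range_cons, range_empty, Set.union_empty, Set.mem_union, Set.mem_singleton_iff,
    Set.mem_insert_iff]
  tauto

/-- U maps S bijectively onto S_A; in particular S and S_A are isomorphic monoids. -/
theorem stmt_16 :
    Set.BijOn U.mulVec (S : Set (Fin 5 → ℤ)) (SA : Set (Fin 5 → ℤ)) ∧
    Nonempty (S ≃+ SA) := by
  let f : (Fin 5 → ℤ) →+ (Fin 5 → ℤ) := (mulVecLin U).toAddMonoidHom
  have hf : Function.Injective f := mulVec_U_injective
  have hSA : SA = AddSubmonoid.closure (f '' Set.range hv) := by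
    rw [SA, ← image_mulVec_U_range_hv]
    rfl
  rw [hSA]
  exact ⟨AddSubmonoid.bijOn_closure_image hf _, ⟨AddSubmonoid.equivClosureImage hf _⟩⟩
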